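/- Let F be the free group on two generators a and b, and let Δ = ⟨a², b²⟩ ≤ F be the subgroup generated by a² and b². Then a and b are recurrent directions for Δ, but the element ab is not a recurrent direction for Δ; in particular, the set of recurrent directions R_F(Δ) is not a subgroup of F. -/

import Mathlib

/-- The conjugation action of `γ` on subgroups: `Δ ↦ γ Δ γ⁻¹`. -/
def conjSubgroup {Γ : Type*} [Group Γ] (γ : Γ) (Δ : Subgroup Γ) : Subgroup Γ :=
  Subgroup.map (MulAut.conj γ).toMonoidHom Δ

/-- The Chabauty topology on `Subgroup Γ`: induced from the product of discrete
topologies on `Γ → Prop` via the membership indicator. -/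
def chabautyTopology (Γ : Type*) [Group Γ] : TopologicalSpace (Subgroup Γ) :=
  TopologicalSpace.induced (fun (Δ : Subgroup Γ) (g : Γ) => g ∈ Δ)
    (@Pi.topologicalSpace Γ (fun _ => Prop) (fun _ => ⊥))

/-- `γ` is a recurrent direction for `Δ`: every Chabauty-open neighbourhood `O` of `Δ`
contains `γ^n Δ γ^{-n}` for some `n ≥ 1`. -/
def IsRecurrentDirection {Γ : Type*} [Group Γ] (γ : Γ) (Δ : Subgroup Γ) : Prop :=
  ∀ O : Set (Subgroup Γ), (chabautyTopology Γ).IsOpen O → Δ ∈ O →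
    ∃ n : ℕ, 1 ≤ n ∧ conjSubgroup (γ ^ n) Δ ∈ O

/-- `Δ` is a boomerang subgroup if every `γ` is a recurrent direction for it. -/
def IsBoomerang {Γ : Type*} [Group Γ] (Δ : Subgroup Γ) : Prop :=
  ∀ γ : Γ, IsRecurrentDirection γ Δ

/-!
`a` and `b` are recurrent for `Δ = ⟨a², b²⟩` because conjugating by `a²` or `b² ∈ Δ` fixes `Δ`.
For `ab`, let `F` act on `ℤ²` with `a` the shear `(x, y) ↦ (x + y, y)` and `b` the swap, so that
`Δ` fixes `(1, 0)` while `(ab)ⁿ (1, 0) = (fib (n + 1), fib n)`. As `{Λ | a² ∈ Λ}` is a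
Chabauty-open neighbourhood of `Δ`, recurrence of `ab` would give `n ≥ 1` with
`(ab)⁻ⁿ a² (ab)ⁿ ∈ Δ`, i.e. `a²` fixing `(fib (n + 1), fib n)`; but `a²` moves every vector with
nonzero second coordinate. So `R_F(Δ)` contains `a` and `b` but not `ab`.
-/

section Recurrence

variable {Γ : Type*} [Group Γ] {γ g : Γ} {Δ : Subgroup Γ}

lemma mem_conjSubgroup : g ∈ conjSubgroup γ Δ ↔ γ⁻¹ * g * γ ∈ Δ :=
  Subgroup.mem_pointwise_smul_iff_inv_smul_mem (a := MulAut.conj γ)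

lemma conjSubgroup_eq_self_of_mem (h : γ ∈ Δ) : conjSubgroup γ Δ = Δ :=
  Subgroup.conj_smul_eq_self_of_mem h

lemma chabautyTopology_isOpen_setOf_mem (g : Γ) :
    (chabautyTopology Γ).IsOpen {Δ : Subgroup Γ | g ∈ Δ} := by
  let _ : TopologicalSpace Prop := ⊥
  have : DiscreteTopology Prop := ⟨rfl⟩
  exact isOpen_induced ((continuous_apply (A := fun _ : Γ => Prop) g).isOpen_preimage
    {p : Prop | p} (isOpen_discrete _))

lemma isRecurrentDirection_of_pow_mem {k : ℕ} (hk : 0 < k) (h : γ ^ k ∈ Δ) :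
    IsRecurrentDirection γ Δ :=
  fun _ _ hΔ => ⟨k, hk, by rwa [conjSubgroup_eq_self_of_mem h]⟩

lemma IsRecurrentDirection.exists_conj_mem (h : IsRecurrentDirection γ Δ) (hg : g ∈ Δ) :
    ∃ n : ℕ, 1 ≤ n ∧ (γ ^ n)⁻¹ * g * γ ^ n ∈ Δ := by
  obtain ⟨n, hn, hmem⟩ := h _ (chabautyTopology_isOpen_setOf_mem g) hg
  exact ⟨n, hn, mem_conjSubgroup.mp hmem⟩

lemma not_isRecurrentDirection_of_le_stabilizer {X : Type*} [MulAction Γ X] {x : X}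
    (hΔ : Δ ≤ MulAction.stabilizer Γ x) (hg : g ∈ Δ)
    (hmoves : ∀ n : ℕ, 1 ≤ n → g • γ ^ n • x ≠ γ ^ n • x) :
    ¬ IsRecurrentDirection γ Δ := by
  intro h
  obtain ⟨n, hn, hconj⟩ := h.exists_conj_mem hg
  have hfix : ((γ ^ n)⁻¹ * g * γ ^ n) • x = x := hΔ hconj
  apply hmoves n hn
  rw [mul_smul, mul_smul, inv_smul_eq_iff] at hfix
  exact hfix

end Recurrence

def shear : Equiv.Perm (ℤ × ℤ) where
  toFun p := (p.1 + p.2, p.2)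
  invFun p := (p.1 - p.2, p.2)
  left_inv p := by simp
  right_inv p := by simp

@[simp] lemma shear_apply (p : ℤ × ℤ) : shear p = (p.1 + p.2, p.2) := rfl

def fibonacciRep : FreeGroup Bool →* Equiv.Perm (ℤ × ℤ) :=
  FreeGroup.lift fun t => if t then Equiv.prodComm ℤ ℤ else shear

@[simp] lemma fibonacciRep_of_false : fibonacciRep (FreeGroup.of false) = shear :=
  FreeGroup.lift_apply_of

@[simp] lemma fibonacciRep_of_true : fibonacciRep (FreeGroup.of true) = Equiv.prodComm ℤ ℤ :=
  FreeGroup.lift_apply_of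

lemma fibonacciRep_closure_sq_apply {d : FreeGroup Bool}
    (hd : d ∈ Subgroup.closure {FreeGroup.of false ^ 2, FreeGroup.of true ^ 2}) :
    fibonacciRep d (1, 0) = (1, 0) := by
  suffices Subgroup.closure {FreeGroup.of false ^ 2, FreeGroup.of true ^ 2} ≤
      (MulAction.stabilizer (Equiv.Perm (ℤ × ℤ)) ((1, 0) : ℤ × ℤ)).comap fibonacciRep from
    this hd
  rw [Subgroup.closure_le]
  rintro x (rfl | rfl) <;> simp [sq]

lemma fibonacciRep_pow_apply (n : ℕ) :
    fibonacciRep ((FreeGroup.of false * FreeGroup.of true) ^ n) (1, 0) =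
      ((Nat.fib (n + 1) : ℤ), (Nat.fib n : ℤ)) := by
  induction n with
  | zero => simp
  | succ n ih =>
    rw [pow_succ', map_mul, Equiv.Perm.mul_apply, ih]
    simp [Nat.fib_add_two]

lemma not_isRecurrentDirection_of_false_mul_of_true :
    ¬ IsRecurrentDirection (FreeGroup.of false * FreeGroup.of true)
      (Subgroup.closure {FreeGroup.of false ^ 2, FreeGroup.of true ^ 2}) := by
  let _ : MulAction (FreeGroup Bool) (ℤ × ℤ) := MulAction.compHom _ fibonacciRep
  refine not_isRecurrentDirection_of_le_stabilizer (x := ((1, 0) : ℤ × ℤ))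
    (fun _ hd => fibonacciRep_closure_sq_apply hd) (Subgroup.subset_closure (Or.inl rfl)) ?_
  intro n hn
  have : 0 < Nat.fib n := Nat.fib_pos.mpr hn
  simp only [MulAction.compHom_smul_def, Equiv.Perm.smul_def, fibonacciRep_pow_apply]
  simp [sq]
  omega

lemma Subgroup.not_exists_coe_eq_of_mul_notMem {Γ : Type*} [Group Γ] {S : Set Γ} {x y : Γ}
    (hx : x ∈ S) (hy : y ∈ S) (hxy : x * y ∉ S) : ¬ ∃ H : Subgroup Γ, (H : Set Γ) = S := by
  rintro ⟨H, rfl⟩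
  exact hxy (mul_mem hx hy)

theorem recurrent_directions_not_subgroup :
    IsRecurrentDirection (FreeGroup.of false)
      (Subgroup.closure {FreeGroup.of false ^ 2, FreeGroup.of true ^ 2}) ∧
    IsRecurrentDirection (FreeGroup.of true)
      (Subgroup.closure {FreeGroup.of false ^ 2, FreeGroup.of true ^ 2}) ∧
    ¬ IsRecurrentDirection (FreeGroup.of false * FreeGroup.of true)
      (Subgroup.closure {FreeGroup.of false ^ 2, FreeGroup.of true ^ 2}) ∧
    ¬ ∃ H : Subgroup (FreeGroup Bool), (H : Set (FreeGroup Bool)) =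
      {γ : FreeGroup Bool | IsRecurrentDirection γ
        (Subgroup.closure {FreeGroup.of false ^ 2, FreeGroup.of true ^ 2})} := by
  set Δ := Subgroup.closure {FreeGroup.of false ^ 2, FreeGroup.of true ^ 2}
  have ha : IsRecurrentDirection (FreeGroup.of false) Δ :=
    isRecurrentDirection_of_pow_mem two_pos (Subgroup.subset_closure (by simp))
  have hb : IsRecurrentDirection (FreeGroup.of true) Δ :=
    isRecurrentDirection_of_pow_mem two_pos (Subgroup.subset_closure (by simp))
  have hab := not_isRecurrentDirection_of_false_mul_of_true
  exact ⟨ha, hb, hab, Subgroup.not_exists_coe_eq_of_mul_notMem ha hb hab⟩
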